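/- arXiv:0804.1067 — 5 statements merged into one kernel-verified Lean document; each statement's English description precedes it below -/
import Mathlib

section
/- The integral of the moment map satisfies lim_{t→∞} Ψ_x(e^{its}g)/t = λ(g·x; s) for any g ∈ G and s ∈ 𝔨, where λ is the maximal weight. -/
/-!
The cocycle formula applied to `g` and `e^{its}` gives
`Ψ_x(e^{its} g) = Ψ_x(g) + ∫₀^t λ_τ(g·x; s) dτ`, so `Ψ_x(e^{its} g) / t` is, up to an
`O(1/t)` error, the time average of the nondecreasing function `τ ↦ λ_τ(g·x; s)`. Such an
average converges to the same limit (in `ℝ ∪ {±∞}`) as the function itself: it is eventually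
above every value `λ_T` the function attains, and never above its supremum.
-/

open Filter MeasureTheory intervalIntegral
open scoped Topology

lemma tendsto_const_div_add_atTop (C k : ℝ) :
    Tendsto (fun t : ℝ => C / t + k) atTop (𝓝 k) := by
  simpa using (tendsto_const_nhds.div_atTop tendsto_id).add (tendsto_const_nhds (x := k))

namespace Monotone

variable {f : ℝ → ℝ}

lemma eventually_lt_const_add_integral_div (hf : Monotone f) (c : ℝ) {T b : ℝ}
    (hb : b < f T) : ∀ᶠ t in atTop, b < (c + ∫ τ in (0:ℝ)..t, f τ) / t := by
  set C := c + (∫ τ in (0:ℝ)..T, f τ) - T * f T with hC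
  filter_upwards [(tendsto_const_div_add_atTop C (f T)).eventually (eventually_gt_nhds hb),
    eventually_ge_atTop T, eventually_gt_atTop 0] with t hCb hTt ht
  have hsplit : (∫ τ in (0:ℝ)..t, f τ) = (∫ τ in (0:ℝ)..T, f τ) + ∫ τ in T..t, f τ :=
    (integral_add_adjacent_intervals (hf.intervalIntegrable (μ := volume))
      hf.intervalIntegrable).symm
  have htail : (t - T) * f T ≤ ∫ τ in T..t, f τ := by
    simpa using integral_mono_on hTt intervalIntegrable_const
      (hf.intervalIntegrable (μ := volume))
      fun τ hτ => hf hτ.1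
  calc b < C / t + f T := hCb
    _ = (C + t * f T) / t := by field_simp
    _ ≤ (c + ∫ τ in (0:ℝ)..t, f τ) / t := (div_le_div_iff_of_pos_right ht).2 (by linarith)

lemma eventually_const_add_integral_div_lt (hf : Monotone f) (c : ℝ) {a b : ℝ}
    (hfa : ∀ τ, f τ ≤ a) (hab : a < b) :
    ∀ᶠ t in atTop, (c + ∫ τ in (0:ℝ)..t, f τ) / t < b := by
  filter_upwards [(tendsto_const_div_add_atTop c a).eventually (eventually_lt_nhds hab),
    eventually_gt_atTop 0] with t hcb ht
  have hbound : (∫ τ in (0:ℝ)..t, f τ) ≤ t * a := by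
    simpa [mul_comm] using integral_mono_on ht.le (hf.intervalIntegrable (μ := volume))
      intervalIntegrable_const fun τ _ => hfa τ
  calc (c + ∫ τ in (0:ℝ)..t, f τ) / t ≤ (c + t * a) / t := by gcongr
    _ = c / t + a := by field_simp
    _ < b := hcb

theorem tendsto_const_add_integral_div (hf : Monotone f) (c : ℝ) {L : EReal}
    (hL : Tendsto (fun τ => (f τ : EReal)) atTop (𝓝 L)) :
    Tendsto (fun t => (((c + ∫ τ in (0:ℝ)..t, f τ) / t : ℝ) : EReal)) atTop (𝓝 L) := by
  refine tendsto_order.2 ⟨fun b' hb' => ?_, fun b' hb' => ?_⟩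
  · obtain ⟨b, hb'b, hbL⟩ := EReal.lt_iff_exists_real_btwn.1 hb'
    obtain ⟨T, hT⟩ := (hL.eventually (eventually_gt_nhds hbL)).exists
    filter_upwards [hf.eventually_lt_const_add_integral_div c (EReal.coe_lt_coe_iff.1 hT)]
      with t ht
    exact hb'b.trans (EReal.coe_lt_coe_iff.2 ht)
  · obtain ⟨a, hLa, hab'⟩ := EReal.lt_iff_exists_real_btwn.1 hb'
    obtain ⟨b, hab, hbb'⟩ := EReal.lt_iff_exists_real_btwn.1 hab'
    have hfa : ∀ τ, f τ ≤ a := fun τ =>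
      EReal.coe_le_coe_iff.1 (((EReal.coe_strictMono.monotone.comp hf).ge_of_tendsto hL τ).trans
        hLa.le)
    filter_upwards [hf.eventually_const_add_integral_div_lt c hfa (EReal.coe_lt_coe_iff.1 hab)]
      with t ht
    exact (EReal.coe_lt_coe_iff.2 ht).trans hbb'

end Monotone

/-- Asymptotics of the integral of the moment map:
`lim_{t→∞} Ψ_x(e^{its} g)/t = λ(g·x; s)`.  Setup: `e s t = e^{its}` is the
imaginary-time one-parameter subgroup of `G`, `Ψ` satisfies the cocycle
formula `Ψ_x(g) + Ψ_{g·x}(h) = Ψ_x(hg)` and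
`Ψ_y(e^{its}) = ∫₀^t λ_τ(y;s) dτ` with `λ_τ(y;s) = ⟨μ(e^{iτs}·y),s⟩`
nondecreasing in `τ`, and `λ(y;s) = lim_{τ→∞} λ_τ(y;s) ∈ ℝ ∪ {∞}` is the
maximal weight. -/
theorem integral_of_momentMap_asymptotics
    {X G 𝔨 : Type*} [Group G] [MulAction G X]
    (e : 𝔨 → ℝ → G) (Ψ : X → G → ℝ) (Λ : X → 𝔨 → ℝ → ℝ) (L : X → 𝔨 → EReal)
    (hcocycle : ∀ (x : X) (g h : G), Ψ x g + Ψ (g • x) h = Ψ x (h * g))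
    (hint : ∀ (y : X) (s : 𝔨) (t : ℝ), Ψ y (e s t) = ∫ τ in (0:ℝ)..t, Λ y s τ)
    (hmono : ∀ (y : X) (s : 𝔨), Monotone (Λ y s))
    (hL : ∀ (y : X) (s : 𝔨),
      Tendsto (fun τ => (↑(Λ y s τ) : EReal)) atTop (𝓝 (L y s)))
    (x : X) (g : G) (s : 𝔨) :
    Tendsto (fun t => (↑(Ψ x (e s t * g) / t) : EReal)) atTop
      (𝓝 (L (g • x) s)) := by
  have hsplit : ∀ t : ℝ, Ψ x (e s t * g) = Ψ x g + ∫ τ in (0:ℝ)..t, Λ (g • x) s τ := fun t => by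
    rw [← hcocycle x g (e s t), hint]
  simpa only [hsplit] using (hmono (g • x) s).tendsto_const_add_integral_div (Ψ x g) (hL (g • x) s)
end

section
/- If for some g ∈ G and s ∈ 𝔨 the quantity Ψ_x(e^{its}g)/t is bounded uniformly in t > 0, then d_X(e^{its}g·x, x)·t^{−1/2} → 0 as t → ∞. -/
/-!
Write `G τ = ∫₀^τ n²`. The hypotheses say `∫₀^t G = F t - C - A t = O(t)`, and since `G` is
nondecreasing, `t G(t) ≤ ∫ₜ^{2t} G`, so `G` is bounded: `n` is square integrable on `(0, ∞)`.
By Cauchy–Schwarz, `∫ₜ₀^t n ≤ √t (∫ₜ₀^∞ n²)^{1/2}`, so `∫₀^t n = o(√t)`, and this controls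
`d(γ t, x) ≤ d(γ 0, x) + ∫₀^t n`.
-/

open Filter MeasureTheory Set intervalIntegral
open scoped Topology

theorem sq_intervalIntegral_le_mul_intervalIntegral_sq {f : ℝ → ℝ} {a b : ℝ} (hab : a ≤ b)
    (hf : IntervalIntegrable f volume a b)
    (hf2 : IntervalIntegrable (fun x => f x ^ 2) volume a b) :
    (∫ x in a..b, f x) ^ 2 ≤ (b - a) * ∫ x in a..b, f x ^ 2 := by
  have hquad : ∀ c : ℝ,
      0 ≤ (b - a) * (c * c) + (-2 * ∫ x in a..b, f x) * c + ∫ x in a..b, f x ^ 2 := by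
    intro c
    have hexpand : ∫ x in a..b, (f x - c) ^ 2
        = (b - a) * (c * c) + (-2 * ∫ x in a..b, f x) * c + ∫ x in a..b, f x ^ 2 := by
      have hpt : ∀ x, (f x - c) ^ 2 = (f x ^ 2 - (2 * c) * f x) + c ^ 2 := fun x => by ring
      simp only [hpt]
      rw [integral_add (hf2.sub (hf.const_mul _)) intervalIntegrable_const,
        integral_sub hf2 (hf.const_mul _), intervalIntegral.integral_const_mul,
        intervalIntegral.integral_const, smul_eq_mul]
      ring
    exact hexpand ▸ integral_nonneg hab fun x _ => sq_nonneg _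
  have := discrim_le_zero hquad
  rw [discrim] at this
  linarith

theorem MeasureTheory.IntegrableOn.exists_forall_ge_norm_intervalIntegral_lt {E : Type*}
    [NormedAddCommGroup E] [NormedSpace ℝ E] [CompleteSpace E] {g : ℝ → E} {a : ℝ}
    (hg : IntegrableOn g (Ioi a)) {δ : ℝ} (hδ : 0 < δ) :
    ∃ T ≥ a, ∀ t ≥ T, ‖∫ x in T..t, g x‖ < δ := by
  obtain ⟨N, hN⟩ := Metric.cauchySeq_iff.1
    (intervalIntegral_tendsto_integral_Ioi a hg tendsto_id).cauchySeq δ hδ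
  refine ⟨max N a, le_max_right _ _, fun t ht => ?_⟩
  have hint : ∀ b ≥ a, IntervalIntegrable g volume a b := fun b hb =>
    (intervalIntegrable_iff_integrableOn_Ioc_of_le hb).2 (hg.mono_set Ioc_subset_Ioi_self)
  rw [← integral_interval_sub_left (hint t (le_max_right N a |>.trans ht))
    (hint _ (le_max_right N a)), ← dist_eq_norm]
  exact hN t ((le_max_left N a).trans ht) _ (le_max_left N a)

theorem tendsto_intervalIntegral_div_sqrt_of_integrableOn_sq {f : ℝ → ℝ} (hf : Continuous f)
    (hf2 : IntegrableOn (fun x => f x ^ 2) (Ioi 0)) :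
    Tendsto (fun t => (∫ x in 0..t, f x) / √t) atTop (𝓝 0) := by
  rw [Metric.tendsto_nhds]
  intro ε hε
  obtain ⟨T, hT0, hT⟩ := hf2.exists_forall_ge_norm_intervalIntegral_lt (δ := (ε / 2) ^ 2)
    (by positivity)
  have hhead : ∀ᶠ t in atTop, |∫ x in 0..T, f x| / √t < ε / 2 :=
    (tendsto_const_nhds.div_atTop Real.tendsto_sqrt_atTop).eventually (gt_mem_nhds (by positivity))
  filter_upwards [hhead, eventually_ge_atTop (max T 1)] with t hhead_t ht
  have hTt : T ≤ t := (le_max_left _ _).trans ht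
  have ht0 : 0 < t := by linarith [le_max_right T 1]
  have hsqrt : 0 < √t := Real.sqrt_pos.2 ht0
  have hint : ∀ a b, IntervalIntegrable f volume a b := fun a b => hf.intervalIntegrable a b
  have htail : |∫ x in T..t, f x| ≤ √t * (ε / 2) := by
    have hsq := sq_intervalIntegral_le_mul_intervalIntegral_sq hTt (hint T t)
      ((hf.pow 2).intervalIntegrable T t)
    have hsmall := (le_abs_self _).trans (hT t hTt).le
    calc |∫ x in T..t, f x| ≤ √((t - T) * ∫ x in T..t, f x ^ 2) := Real.abs_le_sqrt hsq
      _ ≤ √(t * (ε / 2) ^ 2) := Real.sqrt_le_sqrt <| mul_le_mul (by linarith) hsmall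
          (integral_nonneg hTt fun _ _ => sq_nonneg _) ht0.le
      _ = √t * (ε / 2) := by rw [Real.sqrt_mul' _ (by positivity), Real.sqrt_sq (by positivity)]
  rw [Real.dist_eq, sub_zero, abs_div, abs_of_pos hsqrt, div_lt_iff₀ hsqrt,
    ← integral_add_adjacent_intervals (hint 0 T) (hint T t)]
  rw [div_lt_iff₀ hsqrt] at hhead_t
  linarith [abs_add_le (∫ x in 0..T, f x) (∫ x in T..t, f x)]

theorem Monotone.bddAbove_range_of_intervalIntegral_le_mul {G : ℝ → ℝ} (hG : Monotone G)
    {K : ℝ} (hK : ∀ᶠ t in atTop, ∫ x in 0..t, G x ≤ K * t) : BddAbove (range G) := by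
  obtain ⟨T, hT⟩ := eventually_atTop.1 hK
  -- `s G(0) + s G(s) ≤ ∫₀^{2s} G ≤ 2 K s` for large `s`, by monotonicity on `[0,s]`, `[s,2s]`
  have hlarge : ∀ s, 0 < s → T ≤ 2 * s → G s ≤ 2 * K - G 0 := by
    intro s hs hsT
    have hGi : ∀ a b, IntervalIntegrable G volume a b := fun a b => hG.intervalIntegrable
    have hlow₁ : (s - 0) * G 0 ≤ ∫ x in 0..s, G x := by
      simpa using integral_mono_on hs.le intervalIntegrable_const (hGi 0 s) fun x hx => hG hx.1
    have hlow₂ : (2 * s - s) * G s ≤ ∫ x in s..2 * s, G x := by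
      simpa using integral_mono_on (by linarith) intervalIntegrable_const (hGi s (2 * s))
        fun x hx => hG hx.1
    have hsplit := integral_add_adjacent_intervals (hGi 0 s) (hGi s (2 * s))
    have := hT (2 * s) hsT
    nlinarith
  refine ⟨2 * K - G 0, forall_mem_range.2 fun s => ?_⟩
  have hs' : 0 < max s (max T 1) := lt_max_of_lt_right (lt_max_of_lt_right one_pos)
  exact (hG (le_max_left _ _)).trans (hlarge _ hs' (by
    have := le_max_left T 1; have := le_max_right s (max T 1); linarith))

theorem integrableOn_sq_Ioi_of_intervalIntegral_primitive_le_mul {f : ℝ → ℝ}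
    (hf : Continuous f) {K : ℝ}
    (hK : ∀ᶠ t in atTop, ∫ τ in 0..t, (∫ u in 0..τ, f u ^ 2) ≤ K * t) :
    IntegrableOn (fun u => f u ^ 2) (Ioi 0) := by
  have hsq_int : ∀ a b, IntervalIntegrable (fun u => f u ^ 2) volume a b :=
    fun a b => (hf.pow 2).intervalIntegrable a b
  have hmono : Monotone fun τ => ∫ u in 0..τ, f u ^ 2 := fun a b hab => by
    dsimp only
    rw [← integral_add_adjacent_intervals (hsq_int 0 a) (hsq_int a b)]
    exact le_add_of_nonneg_right (integral_nonneg hab fun u _ => sq_nonneg (f u))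
  obtain ⟨B, hB⟩ := hmono.bddAbove_range_of_intervalIntegral_le_mul hK
  exact integrableOn_Ioi_of_intervalIntegral_norm_bounded B 0
    (fun i => (hf.pow 2).integrableOn_Ioc) tendsto_id
    (Eventually.of_forall fun i => by simpa using hB ⟨i, rfl⟩)

theorem dist_div_sqrt_tendsto_zero_of_psi_bounded_general
    {X : Type*} [MetricSpace X]
    (x : X) (γ : ℝ → X) (F n : ℝ → ℝ) (C A : ℝ)
    (hncont : Continuous n)
    (hF : ∀ t : ℝ, F t =
      C + ∫ τ in (0:ℝ)..t, (A + ∫ u in (0:ℝ)..τ, (n u) ^ 2))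
    (hdist : ∀ t : ℝ, 0 ≤ t →
      dist (γ t) (γ 0) ≤ ∫ τ in (0:ℝ)..t, n τ)
    (hbound : ∃ M : ℝ, ∀ t : ℝ, 0 < t → |F t| / t ≤ M) :
    Tendsto (fun t => dist (γ t) x / Real.sqrt t) atTop (𝓝 0) := by
  obtain ⟨M, hM⟩ := hbound
  have hlin : ∀ᶠ t in atTop,
      ∫ τ in (0:ℝ)..t, (∫ u in (0:ℝ)..τ, n u ^ 2) ≤ (M + |C| + |A|) * t := by
    filter_upwards [eventually_ge_atTop 1] with t ht
    have hprim : Continuous fun τ => ∫ u in (0:ℝ)..τ, n u ^ 2 :=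
      continuous_primitive (fun a b => (hncont.pow 2).intervalIntegrable a b) 0
    have hFt : F t = C + A * t + ∫ τ in (0:ℝ)..t, (∫ u in (0:ℝ)..τ, n u ^ 2) := by
      rw [hF, integral_add intervalIntegrable_const (hprim.intervalIntegrable 0 t),
        intervalIntegral.integral_const, smul_eq_mul]
      ring
    have hMt := hM t (by linarith)
    rw [div_le_iff₀ (by linarith)] at hMt
    nlinarith [neg_abs_le C, neg_abs_le A, le_abs_self (F t),
      mul_nonneg (abs_nonneg C) (sub_nonneg.2 ht)]
  have hsq := integrableOn_sq_Ioi_of_intervalIntegral_primitive_le_mul hncont hlin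
  have hconst : Tendsto (fun t => dist (γ 0) x / √t) atTop (𝓝 0) :=
    tendsto_const_nhds.div_atTop Real.tendsto_sqrt_atTop
  refine squeeze_zero' (Eventually.of_forall fun t => by positivity) ?_
    (by simpa using hconst.add (tendsto_intervalIntegral_div_sqrt_of_integrableOn_sq hncont hsq))
  filter_upwards [eventually_ge_atTop 0] with t ht
  rw [← add_div]
  gcongr
  linarith [dist_triangle (γ t) (γ 0) x, hdist t ht]

/-- If `Ψ_x(e^{its}g)/t` is bounded uniformly in `t > 0`, then
`d_X(e^{its}g·x, x)·t^{−1/2} → 0` as `t → ∞`.  Setup: `γ(t) = e^{its}g·x`,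
`n(τ) = |ξ_s(e^{iτs}g·x)|`, `F(t) = Ψ_x(e^{its}g)`.  The cocycle formula plus
`Ψ_{g·x}(e^{its}) = ∫₀^t ⟨μ(e^{iτs}g·x),s⟩ dτ` and
`⟨μ(e^{iτs}g·x),s⟩ = A + ∫₀^τ n(u)² du` give the hypothesis `hF` (with
`C = Ψ_x(g)`, `A = ⟨μ(g·x),s⟩`); the flow estimate gives `hdist`. -/
theorem dist_div_sqrt_tendsto_zero_of_psi_bounded
    {X : Type*} [MetricSpace X]
    (x : X) (γ : ℝ → X) (F n : ℝ → ℝ) (C A : ℝ)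
    (hn0 : ∀ τ, 0 ≤ n τ) (hncont : Continuous n)
    (hF : ∀ t : ℝ, F t =
      C + ∫ τ in (0:ℝ)..t, (A + ∫ u in (0:ℝ)..τ, (n u) ^ 2))
    (hdist : ∀ t : ℝ, 0 ≤ t →
      dist (γ t) (γ 0) ≤ ∫ τ in (0:ℝ)..t, n τ)
    (hbound : ∃ M : ℝ, ∀ t : ℝ, 0 < t → |F t| / t ≤ M) :
    Tendsto (fun t => dist (γ t) x / Real.sqrt t) atTop (𝓝 0) :=
  dist_div_sqrt_tendsto_zero_of_psi_bounded_general x γ F n C A hncont hF hdist hbound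
end

section
/- For K = U(n), G = GL(n,ℂ), s ∈ 𝔲(n) with is having eigenvalues λ₁ < … < λ_r and eigenspaces V_j, and g ∈ G, define V_j^∞ = (g⁻¹(V₁⊕…⊕V_{j−1}))^⊥ ∩ g⁻¹(V₁⊕…⊕V_j). Then ℂⁿ = ⊕_j V_j^∞ is a direct sum decomposition. -/
/-!
The subspaces `g⁻¹(V₁ ⊕ ⋯ ⊕ V_j)` form an increasing flag exhausting `ℂⁿ`, and `V_j^∞` is the
orthogonal complement of each step of the flag inside the next one. Such layers are pairwise
orthogonal, hence independent, and by induction along the flag each step is the sum of the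
layers below it, so the layers span.
-/

namespace Submodule

variable {𝕜 E ι : Type*} [RCLike 𝕜] [NormedAddCommGroup E] [InnerProductSpace 𝕜 E] [LinearOrder ι]

def orthogonalLayer (V : ι → Submodule 𝕜 E) (j : ι) : Submodule 𝕜 E :=
  (⨆ i, ⨆ _ : i < j, V i)ᗮ ⊓ ⨆ i, ⨆ _ : i ≤ j, V i

theorem orthogonalFamily_orthogonalLayer (V : ι → Submodule 𝕜 E) :
    OrthogonalFamily 𝕜 (fun j => orthogonalLayer V j) fun j => (orthogonalLayer V j).subtypeₗᵢ := by
  refine orthogonalFamily_iff_pairwise.mpr <| (Std.Symm.pairwise_on _).mpr fun i j hij => ?_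
  refine (isOrtho_orthogonal_right _).mono (inf_le_right.trans ?_) inf_le_left
  exact iSup₂_mono' fun k hk => ⟨k, hk.trans_lt hij, le_rfl⟩

theorem le_iSup_orthogonalLayer [FiniteDimensional 𝕜 E] [WellFoundedLT ι]
    (V : ι → Submodule 𝕜 E) (j : ι) : V j ≤ ⨆ k, orthogonalLayer V k := by
  induction j using WellFoundedLT.induction with
  | _ j ih =>
  have hlt : ⨆ i, ⨆ _ : i < j, V i ≤ ⨆ k, orthogonalLayer V k := iSup₂_le fun i hi => ih i hi
  calc V j ≤ ⨆ i, ⨆ _ : i ≤ j, V i := le_iSup₂_of_le (f := fun k (_ : k ≤ j) => V k) j le_rfl le_rfl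
    _ = (⨆ i, ⨆ _ : i < j, V i) ⊔ orthogonalLayer V j :=
        (sup_orthogonal_inf_of_hasOrthogonalProjection
          (iSup₂_mono' fun i hi => ⟨i, hi.le, le_rfl⟩)).symm
    _ ≤ ⨆ k, orthogonalLayer V k := sup_le hlt (le_iSup _ j)

theorem iSup_orthogonalLayer [FiniteDimensional 𝕜 E] [WellFoundedLT ι] (V : ι → Submodule 𝕜 E) :
    ⨆ k, orthogonalLayer V k = ⨆ j, V j :=
  le_antisymm (iSup_le fun _ => inf_le_right.trans (iSup₂_le fun i _ => le_iSup V i))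
    (iSup_le (le_iSup_orthogonalLayer V))

theorem isInternal_orthogonalLayer [FiniteDimensional 𝕜 E] [WellFoundedLT ι] [DecidableEq ι]
    {V : ι → Submodule 𝕜 E} (hV : ⨆ j, V j = ⊤) :
    DirectSum.IsInternal (orthogonalLayer V) :=
  (DirectSum.isInternal_submodule_iff_iSupIndep_and_iSup_eq_top _).mpr
    ⟨(orthogonalFamily_orthogonalLayer V).independent, (iSup_orthogonalLayer V).trans hV⟩

end Submodule

theorem vinf_isInternal_general
    {n r : ℕ}
    (V : Fin r → Submodule ℂ (EuclideanSpace ℂ (Fin n)))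
    (hsup : (⨆ j, V j) = ⊤)
    (g : EuclideanSpace ℂ (Fin n) ≃ₗ[ℂ] EuclideanSpace ℂ (Fin n)) :
    DirectSum.IsInternal (fun j : Fin r =>
      (Submodule.comap (g : EuclideanSpace ℂ (Fin n) →ₗ[ℂ] EuclideanSpace ℂ (Fin n))
          (⨆ i, ⨆ _ : i < j, V i))ᗮ ⊓
        Submodule.comap (g : EuclideanSpace ℂ (Fin n) →ₗ[ℂ] EuclideanSpace ℂ (Fin n))
          (⨆ i, ⨆ _ : i ≤ j, V i)) := by
  have hsup_map : ⨆ j, (V j).map g.symm.toLinearMap = ⊤ := by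
    rw [← Submodule.map_iSup, hsup, Submodule.map_top, LinearEquiv.range]
  simp only [Submodule.comap_equiv_eq_map_symm, Submodule.map_iSup]
  exact Submodule.isInternal_orthogonalLayer hsup_map

/-- For `K = U(n)`, `G = GL(n,ℂ)`: let `s ∈ 𝔲(n)`, so that `is` is Hermitian
with eigenvalues `λ₁ < … < λ_r` and eigenspaces `V_j`, and let `g ∈ G`.
With `V_j^∞ = (g⁻¹(V₁⊕…⊕V_{j−1}))^⊥ ∩ g⁻¹(V₁⊕…⊕V_j)`, the family
`(V_j^∞)_j` gives a direct sum decomposition `ℂⁿ = ⊕_j V_j^∞`. -/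
theorem vinf_isInternal
    {n r : ℕ}
    (s : EuclideanSpace ℂ (Fin n) →ₗ[ℂ] EuclideanSpace ℂ (Fin n))
    (hs : LinearMap.IsSymmetric ((Complex.I : ℂ) • s))
    (lam : Fin r → ℝ) (hlam : StrictMono lam)
    (V : Fin r → Submodule ℂ (EuclideanSpace ℂ (Fin n)))
    (hV : ∀ j, V j = Module.End.eigenspace ((Complex.I : ℂ) • s) (lam j : ℂ))
    (hsup : (⨆ j, V j) = ⊤)
    (g : EuclideanSpace ℂ (Fin n) ≃ₗ[ℂ] EuclideanSpace ℂ (Fin n)) :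
    DirectSum.IsInternal (fun j : Fin r =>
      (Submodule.comap (g : EuclideanSpace ℂ (Fin n) →ₗ[ℂ] EuclideanSpace ℂ (Fin n))
          (⨆ i, ⨆ _ : i < j, V i))ᗮ ⊓
        Submodule.comap (g : EuclideanSpace ℂ (Fin n) →ₗ[ℂ] EuclideanSpace ℂ (Fin n))
          (⨆ i, ⨆ _ : i ≤ j, V i)) :=
  vinf_isInternal_general V hsup g
end

section
/- Suppose x₁, x₂ ∈ μ⁻¹(0) with x₂ = e^{its}·x₁ for some s ∈ 𝔨 and t > 0. Then ξ_s(e^{iτs}·x₁) = 0 for all τ ∈ [0,t], and hence x₂ = x₁. Consequently G·x ∩ μ⁻¹(0) contains at most one K-orbit. -/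
/-!
Along the imaginary-time flow `τ ↦ e^{iτs}·x`, the function `⟨μ, s⟩` grows by
`∫ ‖ξ_s‖²`. If both ends of the flow line lie in `μ⁻¹(0)` this integral vanishes, so the
continuous integrand `ξ_s` vanishes along the whole line, which therefore has length zero
and is constant. The Cartan decomposition reduces two zero-level points of one `G`-orbit
to such a flow line up to `K`.
-/

open scoped RealInnerProductSpace
open Set MeasureTheory

theorem eqOn_zero_of_intervalIntegral_eq_zero {g : ℝ → ℝ} (hg : Continuous g) (hnn : 0 ≤ g)
    {a b : ℝ} (hab : a < b) (hint : ∫ x in a..b, g x = 0) : EqOn g 0 (Icc a b) := by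
  have hae : g =ᵐ[volume.restrict (Ioc a b)] 0 :=
    (intervalIntegral.integral_eq_zero_iff_of_le_of_nonneg_ae hab.le
      (.of_forall hnn) (hg.intervalIntegrable a b)).mp hint
  rw [Measure.restrict_congr_set Ioc_ae_eq_Icc] at hae
  exact Measure.eqOn_Icc_of_ae_eq volume hab.ne hae hg.continuousOn continuousOn_const

section ImaginaryTimeFlow

variable {X E 𝔨 : Type*} [NormedAddCommGroup E] [NormedAddCommGroup 𝔨] [InnerProductSpace ℝ 𝔨]
  {Φ : 𝔨 → ℝ → X → X} {μ : X → 𝔨} {ξ : 𝔨 → X → E}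

theorem integral_norm_sq_eq_zero_of_momentMap_eq_zero
    (hkey : ∀ (s : 𝔨) (x : X) (t : ℝ),
      ⟪μ (Φ s t x), s⟫ = ⟪μ x, s⟫ + ∫ τ in (0:ℝ)..t, ‖ξ s (Φ s τ x)‖ ^ 2)
    {x : X} {s : 𝔨} {t : ℝ} (hμx : μ x = 0) (hμΦ : μ (Φ s t x) = 0) :
    ∫ τ in (0:ℝ)..t, ‖ξ s (Φ s τ x)‖ ^ 2 = 0 := by
  simpa [hμx, hμΦ] using (hkey s x t).symm

theorem vectorField_eq_zero_of_momentMap_eq_zero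
    (hkey : ∀ (s : 𝔨) (x : X) (t : ℝ),
      ⟪μ (Φ s t x), s⟫ = ⟪μ x, s⟫ + ∫ τ in (0:ℝ)..t, ‖ξ s (Φ s τ x)‖ ^ 2)
    (hcont : ∀ (s : 𝔨) (x : X), Continuous fun τ => ξ s (Φ s τ x))
    {x : X} {s : 𝔨} {t : ℝ} (ht : 0 < t) (hμx : μ x = 0) (hμΦ : μ (Φ s t x) = 0) :
    ∀ τ ∈ Icc (0 : ℝ) t, ξ s (Φ s τ x) = 0 := fun τ hτ => by
  have hsq := eqOn_zero_of_intervalIntegral_eq_zero ((hcont s x).norm.pow 2)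
    (fun _ => sq_nonneg _) ht (integral_norm_sq_eq_zero_of_momentMap_eq_zero hkey hμx hμΦ) hτ
  simpa using hsq

theorem flow_eq_self_of_momentMap_eq_zero [MetricSpace X]
    (hkey : ∀ (s : 𝔨) (x : X) (t : ℝ),
      ⟪μ (Φ s t x), s⟫ = ⟪μ x, s⟫ + ∫ τ in (0:ℝ)..t, ‖ξ s (Φ s τ x)‖ ^ 2)
    (hcont : ∀ (s : 𝔨) (x : X), Continuous fun τ => ξ s (Φ s τ x))
    (hlip : ∀ (s : 𝔨) (y : X) (t : ℝ), 0 ≤ t →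
      dist (Φ s t y) y ≤ ∫ τ in (0:ℝ)..t, ‖ξ s (Φ s τ y)‖)
    {x : X} {s : 𝔨} {t : ℝ} (ht : 0 ≤ t) (hμx : μ x = 0) (hμΦ : μ (Φ s t x) = 0) :
    Φ s t x = x := by
  suffices hlength : ∫ τ in (0:ℝ)..t, ‖ξ s (Φ s τ x)‖ = 0 from
    dist_le_zero.mp (hlength ▸ hlip s x t ht)
  rcases ht.eq_or_lt with rfl | ht
  · exact intervalIntegral.integral_same
  · refine (intervalIntegral.integral_congr fun τ hτ => ?_).trans intervalIntegral.integral_zero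
    rw [uIcc_of_le ht.le] at hτ
    simp [vectorField_eq_zero_of_momentMap_eq_zero hkey hcont ht hμx hμΦ τ hτ]

end ImaginaryTimeFlow

theorem exists_smul_eq_of_flow_eq_self {X 𝔨 G : Type*} [Zero 𝔨] [Group G] [MulAction G X]
    {Φ : 𝔨 → ℝ → X → X} {μ : X → 𝔨} {K : Subgroup G}
    (hfix : ∀ (y : X) (s : 𝔨) (t : ℝ), 0 ≤ t → μ y = 0 → μ (Φ s t y) = 0 → Φ s t y = y)
    (hKμ : ∀ k ∈ K, ∀ y : X, μ y = 0 → μ (k • y) = 0)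
    (hCartan : ∀ y₁ y₂ : X, (∃ g : G, g • y₁ = y₂) →
      ∃ k ∈ K, ∃ (s : 𝔨) (t : ℝ), 0 ≤ t ∧ Φ s t y₁ = k • y₂)
    {y₁ y₂ : X} (h₁ : μ y₁ = 0) (h₂ : μ y₂ = 0) (hG : ∃ g : G, g • y₁ = y₂) :
    ∃ k ∈ K, k • y₁ = y₂ := by
  obtain ⟨k, hk, s, t, ht, hΦ⟩ := hCartan y₁ y₂ hG
  have hky : k • y₂ = y₁ := hΦ ▸ hfix y₁ s t ht h₁ (hΦ ▸ hKμ k hk y₂ h₂)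
  exact ⟨k⁻¹, K.inv_mem hk, by rw [← hky, inv_smul_smul]⟩

/-- If `x₁, x₂ ∈ μ⁻¹(0)` and `x₂ = e^{its}·x₁` (`t > 0`), then
`ξ_s(e^{iτs}·x₁) = 0` for all `τ ∈ [0,t]` and `x₂ = x₁`.  Consequently
`G·x ∩ μ⁻¹(0)` contains at most one `K`-orbit.  Setup: `Φ s t x = e^{its}·x`,
the key formula `⟨μ(e^{its}·x),s⟩ = ⟨μ(x),s⟩ + ∫₀^t |ξ_s(e^{iτs}·x)|² dτ`,
the flow length estimate `hlip`, the Cartan decomposition `hCartan` relating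
points of a `G`-orbit through `K` and an imaginary-time flow, and
`K`-invariance of `μ⁻¹(0)`. -/
theorem momentMap_zero_level_one_K_orbit
    {X E 𝔨 G : Type*} [MetricSpace X] [NormedAddCommGroup E]
    [NormedAddCommGroup 𝔨] [InnerProductSpace ℝ 𝔨]
    [Group G] [MulAction G X]
    (Φ : 𝔨 → ℝ → X → X) (μ : X → 𝔨) (ξ : 𝔨 → X → E)
    (hkey : ∀ (s : 𝔨) (x : X) (t : ℝ),
      ⟪μ (Φ s t x), s⟫ = ⟪μ x, s⟫ + ∫ τ in (0:ℝ)..t, ‖ξ s (Φ s τ x)‖ ^ 2)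
    (hcont : ∀ (s : 𝔨) (x : X), Continuous fun τ => ξ s (Φ s τ x))
    (hlip : ∀ (s : 𝔨) (y : X) (t : ℝ), 0 ≤ t →
      dist (Φ s t y) y ≤ ∫ τ in (0:ℝ)..t, ‖ξ s (Φ s τ y)‖)
    (K : Subgroup G)
    (hKμ : ∀ k ∈ K, ∀ y : X, μ y = 0 → μ (k • y) = 0)
    (hCartan : ∀ y₁ y₂ : X, (∃ g : G, g • y₁ = y₂) →
      ∃ k ∈ K, ∃ (s : 𝔨) (t : ℝ), 0 ≤ t ∧ Φ s t y₁ = k • y₂)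
    (x₁ x₂ : X) (s : 𝔨) (t : ℝ) (ht : 0 < t)
    (hμ1 : μ x₁ = 0) (hμ2 : μ x₂ = 0) (hx2 : Φ s t x₁ = x₂) :
    (∀ τ ∈ Set.Icc (0 : ℝ) t, ξ s (Φ s τ x₁) = 0) ∧ x₂ = x₁ ∧
      (∀ y₁ y₂ : X, μ y₁ = 0 → μ y₂ = 0 → (∃ g : G, g • y₁ = y₂) →
        ∃ k ∈ K, k • y₁ = y₂) := by
  subst hx2
  have hfix : ∀ (y : X) (s : 𝔨) (t : ℝ), 0 ≤ t → μ y = 0 → μ (Φ s t y) = 0 → Φ s t y = y :=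
    fun _ _ _ ht => flow_eq_self_of_momentMap_eq_zero hkey hcont hlip ht
  exact ⟨vectorField_eq_zero_of_momentMap_eq_zero hkey hcont ht hμ1 hμ2,
    hfix x₁ s t ht.le hμ1 hμ2,
    fun _ _ h₁ h₂ hG => exists_smul_eq_of_flow_eq_self hfix hKμ hCartan h₁ h₂ hG⟩
end

section
/- Let x ∈ X satisfy μ(x) = 0. Then λ(x;s) ≥ 0 for every s ∈ 𝔨, and λ(x;s) = 0 if and only if ξ_s(x) = 0; in particular λ(x;s) = 0 if and only if λ(x;−s) = 0, so x is analytically polystable. -/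
open Filter MeasureTheory
open scoped Topology RealInnerProductSpace

/-!
Since `μ x = 0`, the key formula says that `t ↦ ⟪μ (e^{its}·x), s⟫` is the primitive
`∫₀^t ‖ξ_s(e^{iτs}·x)‖²`, a nondecreasing function vanishing at `0`. Its limit `λ(x;s)` is
therefore `≥ 0`, and it is `> 0` as soon as the continuous integrand is nonzero at `τ = 0`,
i.e. as soon as `ξ_s(x) ≠ 0`. Conversely, if `ξ_s(x) = 0` then `x` is fixed by the flow and
`λ(x;s) = ⟪μ x, s⟫ = 0`. Finally `‖ξ_{-s}‖ = ‖ξ_s‖` makes the vanishing condition symmetric.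
-/

section PrimitiveOfNonneg

variable {f : ℝ → ℝ}

theorem monotone_integral_of_nonneg (hf : LocallyIntegrable f) (hf₀ : ∀ τ, 0 ≤ f τ) (a : ℝ) :
    Monotone fun t => ∫ τ in a..t, f τ := by
  intro b c hbc
  have hint : ∀ u v : ℝ, IntervalIntegrable f volume u v := fun u v =>
    (hf.integrableOn_isCompact isCompact_uIcc).intervalIntegrable
  have hbc₀ : 0 ≤ ∫ τ in b..c, f τ := intervalIntegral.integral_nonneg_of_forall hbc hf₀
  simp only [← intervalIntegral.integral_add_adjacent_intervals (hint a b) (hint b c)]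
  linarith

theorem integral_le_of_tendsto_integral (hf : LocallyIntegrable f) (hf₀ : ∀ τ, 0 ≤ f τ)
    {a : ℝ} {ℓ : EReal}
    (hℓ : Tendsto (fun t => ((∫ τ in a..t, f τ : ℝ) : EReal)) atTop (𝓝 ℓ)) (t : ℝ) :
    ((∫ τ in a..t, f τ : ℝ) : EReal) ≤ ℓ :=
  (EReal.coe_strictMono.monotone.comp (monotone_integral_of_nonneg hf hf₀ a)).ge_of_tendsto hℓ t

theorem nonneg_of_tendsto_integral (hf : LocallyIntegrable f) (hf₀ : ∀ τ, 0 ≤ f τ)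
    {a : ℝ} {ℓ : EReal}
    (hℓ : Tendsto (fun t => ((∫ τ in a..t, f τ : ℝ) : EReal)) atTop (𝓝 ℓ)) : 0 ≤ ℓ := by
  simpa using integral_le_of_tendsto_integral hf hf₀ hℓ a

theorem eq_zero_of_tendsto_integral_zero (hf : Continuous f) (hf₀ : ∀ τ, 0 ≤ f τ) {a : ℝ}
    (h : Tendsto (fun t => ((∫ τ in a..t, f τ : ℝ) : EReal)) atTop (𝓝 0)) : f a = 0 := by
  by_contra ha
  have hpos : 0 < ∫ τ in a..a + 1, f τ :=
    intervalIntegral.integral_pos (by linarith) hf.continuousOn (fun τ _ => hf₀ τ)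
      ⟨a, ⟨le_rfl, by linarith⟩, lt_of_le_of_ne (hf₀ a) (Ne.symm ha)⟩
  have hle := integral_le_of_tendsto_integral hf.locallyIntegrable hf₀ h (a + 1)
  exact (EReal.coe_pos.mpr hpos).not_ge hle

end PrimitiveOfNonneg

/-- If `μ(x) = 0` then `λ(x;s) ≥ 0` for every `s ∈ 𝔨`, and `λ(x;s) = 0` iff
`ξ_s(x) = 0`; in particular `λ(x;s) = 0` iff `λ(x;−s) = 0`, so every vanishing
direction `s` is opposed (via `s ↦ −s`) to another vanishing direction, i.e.
`x` is analytically polystable.  Setup: `Φ s t x = e^{its}·x`, the key formula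
`⟨μ(e^{its}·x),s⟩ = ⟨μ(x),s⟩ + ∫₀^t |ξ_s(e^{iτs}·x)|² dτ`, `‖ξ_{−s}‖ = ‖ξ_s‖`,
points with vanishing fundamental vector field are fixed by the flow (`hfix`),
and `λ(x;s) = L s ∈ ℝ ∪ {∞}` (as an `EReal`) is the limit of
`⟨μ(e^{its}·x),s⟩`. -/
theorem momentMap_zero_implies_polystable
    {X E 𝔨 : Type*} [NormedAddCommGroup E]
    [NormedAddCommGroup 𝔨] [InnerProductSpace ℝ 𝔨]
    (Φ : 𝔨 → ℝ → X → X) (μ : X → 𝔨) (ξ : 𝔨 → X → E)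
    (hΦ0 : ∀ (s : 𝔨) (x : X), Φ s 0 x = x)
    (hkey : ∀ (s : 𝔨) (x : X) (t : ℝ),
      ⟪μ (Φ s t x), s⟫ = ⟪μ x, s⟫ + ∫ τ in (0:ℝ)..t, ‖ξ s (Φ s τ x)‖ ^ 2)
    (hcont : ∀ (s : 𝔨) (x : X), Continuous fun τ => ξ s (Φ s τ x))
    (hξneg : ∀ (s : 𝔨) (y : X), ‖ξ (-s) y‖ = ‖ξ s y‖)
    (hfix : ∀ (s : 𝔨) (y : X), ξ s y = 0 → ∀ t : ℝ, Φ s t y = y)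
    (x : X) (hμx : μ x = 0)
    (L : 𝔨 → EReal)
    (hL : ∀ s : 𝔨,
      Tendsto (fun t => (↑(⟪μ (Φ s t x), s⟫) : EReal)) atTop (𝓝 (L s))) :
    (∀ s : 𝔨, 0 ≤ L s) ∧
      (∀ s : 𝔨, L s = 0 ↔ ξ s x = 0) ∧
      (∀ s : 𝔨, L s = 0 ↔ L (-s) = 0) := by
  have hLint : ∀ s, Tendsto (fun t => ((∫ τ in (0:ℝ)..t, ‖ξ s (Φ s τ x)‖ ^ 2 : ℝ) : EReal))
      atTop (𝓝 (L s)) := fun s => by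
    simpa only [hkey, hμx, inner_zero_left, zero_add] using hL s
  have hcont_sq : ∀ s, Continuous fun τ => ‖ξ s (Φ s τ x)‖ ^ 2 := fun s => (hcont s x).norm.pow 2
  have hvanish : ∀ s, L s = 0 ↔ ξ s x = 0 := fun s => by
    refine ⟨fun h => ?_, fun h => ?_⟩
    · have h₀ := eq_zero_of_tendsto_integral_zero (hcont_sq s) (fun τ => by positivity)
        (h ▸ hLint s)
      simpa only [hΦ0, sq_eq_zero_iff, norm_eq_zero] using h₀
    · refine tendsto_nhds_unique (hL s) ?_
      simp [hfix s x h, hμx]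
  refine ⟨fun s => ?_, hvanish, fun s => ?_⟩
  · exact nonneg_of_tendsto_integral (hcont_sq s).locallyIntegrable (fun τ => by positivity)
      (hLint s)
  · rw [hvanish, hvanish, ← norm_eq_zero, ← norm_eq_zero (a := ξ (-s) x), hξneg]
end
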